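/- Let λ > 0 and a ∈ ℂ. The function u ↦ λ|u| + (1/2)|u − a|² has a unique minimizer over ℂ, equal to sgn(a)·max(|a| − λ, 0), where sgn(a) = a/|a| if a ≠ 0 and sgn(0) = 0. -/

import Mathlib

/-!
The objective `u ↦ λ‖u‖ + ½‖u - a‖²` is 1-strongly convex, so at any point `p` where
`a - p` is a subgradient of `λ‖·‖` it grows at least like `½‖u - p‖²`. For the soft-threshold
`p = max (‖a‖ - λ) 0 / ‖a‖ • a` this subgradient condition reads `⟪p, a - p⟫ = λ‖p‖` and
`‖a - p‖ ≤ λ`, both direct computations in any real inner product space, `ℂ` included.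
-/

open RealInnerProductSpace

section SoftThreshold

variable {E : Type*} [NormedAddCommGroup E] [InnerProductSpace ℝ E]

noncomputable def normProxObjective (lam : ℝ) (a u : E) : ℝ := lam * ‖u‖ + 1 / 2 * ‖u - a‖ ^ 2

/-- At `a = 0` the junk value `x / 0 = 0` makes this `0`, the correct threshold. -/
noncomputable def softThreshold (lam : ℝ) (a : E) : E := (max (‖a‖ - lam) 0 / ‖a‖) • a

theorem normProxObjective_add_le_of_subgradient {lam : ℝ} {a p : E}
    (hnorm : ‖a - p‖ ≤ lam) (hinner : ⟪p, a - p⟫ = lam * ‖p‖) (u : E) :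
    normProxObjective lam a p + 1 / 2 * ‖u - p‖ ^ 2 ≤ normProxObjective lam a u := by
  have hexpand : ‖u - a‖ ^ 2 = ‖u - p‖ ^ 2 - 2 * ⟪u - p, a - p⟫ + ‖a - p‖ ^ 2 := by
    rw [← norm_sub_sq_real, sub_sub_sub_cancel_right]
  have hcs : ⟪u, a - p⟫ ≤ lam * ‖u‖ :=
    calc ⟪u, a - p⟫ ≤ ‖u‖ * ‖a - p‖ := real_inner_le_norm _ _
      _ ≤ ‖u‖ * lam := mul_le_mul_of_nonneg_left hnorm (norm_nonneg u)
      _ = lam * ‖u‖ := mul_comm _ _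
  simp only [normProxObjective, hexpand, inner_sub_left, norm_sub_rev p a]
  linarith

theorem sub_softThreshold_of_le {lam : ℝ} {a : E} (ha : a ≠ 0) (h : lam ≤ ‖a‖) :
    a - softThreshold lam a = (lam / ‖a‖) • a := by
  have hcoeff : 1 - (‖a‖ - lam) / ‖a‖ = lam / ‖a‖ := by
    field_simp [norm_ne_zero_iff.mpr ha]
    ring
  rw [softThreshold, max_eq_left (sub_nonneg.mpr h), ← hcoeff, sub_smul, one_smul]

theorem norm_sub_softThreshold_le {lam : ℝ} (hlam : 0 ≤ lam) (a : E) :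
    ‖a - softThreshold lam a‖ ≤ lam := by
  rcases le_or_gt ‖a‖ lam with hsmall | hlarge
  · simpa [softThreshold, max_eq_right (sub_nonpos.mpr hsmall)] using hsmall
  · have ha : 0 < ‖a‖ := hlam.trans_lt hlarge
    rw [sub_softThreshold_of_le (norm_pos_iff.mp ha) hlarge.le, norm_smul, Real.norm_eq_abs,
      abs_div, abs_norm, abs_of_nonneg hlam, div_mul_cancel₀ _ ha.ne']

theorem inner_softThreshold_sub {lam : ℝ} (hlam : 0 ≤ lam) (a : E) :
    ⟪softThreshold lam a, a - softThreshold lam a⟫ = lam * ‖softThreshold lam a‖ := by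
  rcases le_or_gt ‖a‖ lam with hsmall | hlarge
  · simp [softThreshold, max_eq_right (sub_nonpos.mpr hsmall)]
  · have ha : 0 < ‖a‖ := hlam.trans_lt hlarge
    have hpos : 0 ≤ ‖a‖ - lam := sub_nonneg.mpr hlarge.le
    rw [sub_softThreshold_of_le (norm_pos_iff.mp ha) hlarge.le, softThreshold,
      max_eq_left hpos, real_inner_smul_left, real_inner_smul_right,
      real_inner_self_eq_norm_sq, norm_smul, Real.norm_eq_abs, abs_div, abs_norm,
      abs_of_nonneg hpos]
    field_simp

theorem normProxObjective_softThreshold_add_le {lam : ℝ} (hlam : 0 ≤ lam) (a u : E) :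
    normProxObjective lam a (softThreshold lam a) + 1 / 2 * ‖u - softThreshold lam a‖ ^ 2 ≤
      normProxObjective lam a u :=
  normProxObjective_add_le_of_subgradient (norm_sub_softThreshold_le hlam a)
    (inner_softThreshold_sub hlam a) u

end SoftThreshold

theorem Complex.softThreshold_eq (lam : ℝ) (a : ℂ) :
    softThreshold lam a =
      (if a = 0 then 0 else a / (‖a‖ : ℂ)) * ((max (‖a‖ - lam) 0 : ℝ) : ℂ) := by
  split_ifs with ha
  · simp [softThreshold, ha]
  · rw [softThreshold, Complex.real_smul]
    push_cast
    ring

/-- Let `λ > 0` and `a ∈ ℂ`. The function `u ↦ λ|u| + (1/2)|u − a|²` has a unique minimizer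
over `ℂ`, equal to `sgn(a) · max (|a| − λ) 0` where `sgn a = a/|a|` if `a ≠ 0` and
`sgn 0 = 0` (complex soft-thresholding). -/
theorem prox_complex_modulus (lam : ℝ) (hlam : 0 < lam) (a : ℂ) :
    let f : ℂ → ℝ := fun u => lam * ‖u‖ + (1 / 2) * ‖u - a‖ ^ 2
    let p : ℂ := (if a = 0 then 0 else a / (‖a‖ : ℂ)) *
      ((max (‖a‖ - lam) 0 : ℝ) : ℂ)
    (∀ u, f p ≤ f u) ∧ (∀ u, (∀ w, f u ≤ f w) → u = p) := by
  intro f p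
  have hgrowth : ∀ u, f p + 1 / 2 * ‖u - p‖ ^ 2 ≤ f u := by
    rw [show p = softThreshold lam a from (Complex.softThreshold_eq lam a).symm]
    exact normProxObjective_softThreshold_add_le hlam.le a
  refine ⟨fun u => (le_add_of_nonneg_right (by positivity)).trans (hgrowth u), fun u hu => ?_⟩
  have hdist : ‖u - p‖ ^ 2 ≤ 0 := by linarith [hgrowth u, hu p]
  exact sub_eq_zero.mp (norm_eq_zero.mp (pow_eq_zero_iff two_ne_zero |>.mp
    (le_antisymm hdist (sq_nonneg _))))
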